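/- (Discrete twisted convolution.) For any matrices G and H on ℂ^d with Weyl symbols g̃(k,j) = Tr(G·D(k,j)) and h̃(k,j) = Tr(H·D(k,j)), the Weyl symbol of the product F = G·H satisfies f̃(k,j) = (1/d) Σ_{k',j' ∈ ZMod d} ω^{2⁻¹(k'j − kj')} g̃(k+k', j+j') h̃(−k', −j'). -/
import Mathlib

open Matrix Complex

noncomputable section

/-- `ω = exp(2πi/d)`, a primitive `d`-th root of unity. -/
def omega (d : ℕ) : ℂ := Complex.exp (2 * Real.pi * Complex.I / d)

/-- Powers of `ω` with exponent valued in `ZMod d`, evaluated via the canonical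
integer representative (well-defined since `ω ^ d = 1`). -/
def wpow (d : ℕ) (x : ZMod d) : ℂ := omega d ^ x.val

/-- The clock matrix `Z`, acting as `Z e_n = ω^n e_n`. -/
def clockZ (d : ℕ) : Matrix (ZMod d) (ZMod d) ℂ :=
  Matrix.diagonal (fun n => wpow d n)

/-- The shift matrix `X`, acting as `X e_n = e_{n+1}`. -/
def shiftX (d : ℕ) : Matrix (ZMod d) (ZMod d) ℂ :=
  Matrix.of (fun i j => if i = j + 1 then 1 else 0)

/-- The displacement operator `D(k,j) = ω^{-2⁻¹ k j} Z^k X^j`. -/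
def Dop (d : ℕ) [NeZero d] (k j : ZMod d) : Matrix (ZMod d) (ZMod d) ℂ :=
  wpow d (-(2⁻¹ * k * j)) • (clockZ d ^ k.val * shiftX d ^ j.val)

/-- The Weyl symbol of a matrix `A`: `Ã(k,j) = Tr(A · D(k,j))`. -/
def weylSymbol (d : ℕ) [NeZero d] (A : Matrix (ZMod d) (ZMod d) ℂ) (k j : ZMod d) : ℂ :=
  Matrix.trace (A * Dop d k j)

lemma omega_pow_d (d : ℕ) [NeZero d] : omega d ^ d = 1 := by
  unfold omega
  rw [← Complex.exp_nat_mul]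
  have h : (d : ℂ) ≠ 0 := Nat.cast_ne_zero.mpr (NeZero.ne d)
  rw [mul_div_assoc', mul_comm, mul_div_assoc, div_self h, mul_one,
    Complex.exp_two_pi_mul_I]

lemma wpow_natCast (d : ℕ) [NeZero d] (n : ℕ) : wpow d (n : ZMod d) = omega d ^ n := by
  unfold wpow
  rw [ZMod.val_natCast]
  conv_rhs => rw [← Nat.div_add_mod n d]
  rw [pow_add, pow_mul, omega_pow_d, one_pow, one_mul]

lemma wpow_add (d : ℕ) [NeZero d] (x y : ZMod d) :
    wpow d (x + y) = wpow d x * wpow d y := by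
  have h := wpow_natCast d (x.val + y.val)
  rw [Nat.cast_add, ZMod.natCast_val, ZMod.natCast_val, ZMod.cast_id, ZMod.cast_id,
    pow_add] at h
  exact h

lemma sum_wpow_eq_zero (d : ℕ) [NeZero d] (hd : 1 < d) :
    ∑ x : ZMod d, wpow d x = 0 := by
  obtain ⟨m, rfl⟩ := Nat.exists_eq_succ_of_ne_zero (NeZero.ne d)
  have h : ∑ x : ZMod (m+1), wpow (m+1) x
      = ∑ i ∈ Finset.range (m+1), omega (m+1) ^ i :=
    Fin.sum_univ_eq_sum_range (fun i => omega (m+1) ^ i) (m+1)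
  rw [h]
  exact (Complex.isPrimitiveRoot_exp (m+1) (NeZero.ne _)).geom_sum_eq_zero hd

lemma sum_wpow_mul (d : ℕ) [NeZero d] (hd : Nat.Prime d) (m : ZMod d) :
    ∑ x : ZMod d, wpow d (x * m) = if m = 0 then (d : ℂ) else 0 := by
  haveI := Fact.mk hd
  by_cases hm : m = 0
  · simp [hm, wpow, Finset.card_univ, ZMod.card]
  · rw [if_neg hm]
    exact (Fintype.sum_equiv (Equiv.mulRight₀ m hm) (fun x => wpow d (x * m))
      (wpow d) (fun x => rfl)).trans (sum_wpow_eq_zero d hd.one_lt)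

lemma clockZ_pow_apply (d : ℕ) [NeZero d] (n : ℕ) (a b : ZMod d) :
    (clockZ d ^ n) a b = if a = b then wpow d ((n : ZMod d) * a) else 0 := by
  rw [clockZ, Matrix.diagonal_pow, Matrix.diagonal_apply]
  congr 1
  unfold wpow
  rw [Pi.pow_apply, ← pow_mul, ← wpow_natCast d (a.val * n), Nat.cast_mul, ZMod.natCast_val,
    ZMod.cast_id, mul_comm]
  rfl

lemma shiftX_pow_apply (d : ℕ) [NeZero d] (n : ℕ) (a b : ZMod d) :
    (shiftX d ^ n) a b = if a = b + (n : ZMod d) then 1 else 0 := by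
  induction n generalizing a b with
  | zero => simp [Matrix.one_apply]
  | succ n ih =>
    rw [pow_succ, Matrix.mul_apply]
    rw [Finset.sum_eq_single (b + 1)]
    · rw [ih]
      simp only [shiftX, Matrix.of_apply, if_pos rfl, mul_one]
      push_cast
      rw [add_assoc, add_comm (1 : ZMod d), mul_one]
    · intro c _ hc
      simp [shiftX, hc]
    · simp

lemma Dop_apply (d : ℕ) [NeZero d] (k j a b : ZMod d) :
    Dop d k j a b = wpow d (-(2⁻¹ * k * j) + k * a) * (if a = b + j then 1 else 0) := by
  rw [Dop, Matrix.smul_apply, Matrix.mul_apply, wpow_add]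
  rw [Finset.sum_eq_single a]
  · rw [clockZ_pow_apply, if_pos rfl, shiftX_pow_apply, ZMod.natCast_val, ZMod.cast_id,
      ZMod.natCast_val, ZMod.cast_id, smul_eq_mul]
    ring
  · intro c _ hc
    rw [clockZ_pow_apply, if_neg (Ne.symm hc), zero_mul]
  · simp

lemma weylSymbol_eq (d : ℕ) [NeZero d] (A : Matrix (ZMod d) (ZMod d) ℂ) (k j : ZMod d) :
    weylSymbol d A k j
      = ∑ a : ZMod d, wpow d (-(2⁻¹ * k * j) + k * (a + j)) * A a (a + j) := by
  rw [weylSymbol, Matrix.trace]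
  simp only [Matrix.diag_apply, Matrix.mul_apply, Dop_apply]
  refine Finset.sum_congr rfl (fun a _ => ?_)
  rw [Finset.sum_eq_single (a + j)]
  · rw [if_pos rfl, mul_one, mul_comm]
  · intro c _ hc
    rw [if_neg hc, mul_zero, mul_zero]
  · simp

theorem discrete_twisted_convolution
    (d : ℕ) [NeZero d] (hd : Nat.Prime d) (hodd : Odd d)
    (G H : Matrix (ZMod d) (ZMod d) ℂ) (k j : ZMod d) :
    weylSymbol d (G * H) k j =
      (1 / (d : ℂ)) * ∑ k' : ZMod d, ∑ j' : ZMod d,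
        wpow d (2⁻¹ * (k' * j - k * j')) *
          weylSymbol d G (k + k') (j + j') * weylSymbol d H (-k') (-j') := by
  haveI := Fact.mk hd
  have hd2 : (2 : ZMod d) ≠ 0 := by
    intro h
    have h' : ((2 : ℕ) : ZMod d) = 0 := by exact_mod_cast h
    have hdvd : d ∣ 2 := (ZMod.natCast_eq_zero_iff 2 d).mp h'
    have heq := (Nat.prime_dvd_prime_iff_eq hd Nat.prime_two).mp hdvd
    rw [heq, Nat.odd_iff] at hodd
    simp at hodd
  have h2 : (2 : ZMod d) * 2⁻¹ = 1 := mul_inv_cancel₀ hd2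
  have hdc : (d : ℂ) ≠ 0 := Nat.cast_ne_zero.mpr (NeZero.ne d)
  simp only [weylSymbol_eq]
  have key : (∑ k' : ZMod d, ∑ j' : ZMod d,
      wpow d (2⁻¹ * (k' * j - k * j')) *
        (∑ a : ZMod d, wpow d (-(2⁻¹ * (k + k') * (j + j')) + (k + k') * (a + (j + j'))) *
          G a (a + (j + j'))) *
        (∑ b : ZMod d, wpow d (-(2⁻¹ * -k' * -j') + -k' * (b + -j')) * H b (b + -j')))
      = (d : ℂ) * ∑ a : ZMod d,
          wpow d (-(2⁻¹ * k * j) + k * (a + j)) * (G * H) a (a + j) := by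
    calc
      _ = ∑ k' : ZMod d, ∑ j' : ZMod d, ∑ a : ZMod d, ∑ b : ZMod d,
            wpow d (k' * (a + (j + j') - b)) *
              (wpow d (-(2⁻¹ * k * j) + k * (a + j)) *
                (G a (a + (j + j')) * H b (b + -j'))) := by
        refine Finset.sum_congr rfl fun k' _ => Finset.sum_congr rfl fun j' _ => ?_
        rw [mul_assoc, Finset.sum_mul_sum, Finset.mul_sum]
        refine Finset.sum_congr rfl fun a _ => ?_
        rw [Finset.mul_sum]
        refine Finset.sum_congr rfl fun b _ => ?_
        have hw : wpow d (2⁻¹ * (k' * j - k * j')) *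
            wpow d (-(2⁻¹ * (k + k') * (j + j')) + (k + k') * (a + (j + j'))) *
            wpow d (-(2⁻¹ * -k' * -j') + -k' * (b + -j'))
            = wpow d ((k' * (a + (j + j') - b)) + (-(2⁻¹ * k * j) + k * (a + j))) := by
          rw [← wpow_add, ← wpow_add]
          congr 1
          linear_combination (-(k * j') - k' * j') * h2
        linear_combination (G a (a + (j + j')) * H b (b + -j')) * hw +
          (G a (a + (j + j')) * H b (b + -j')) *
            (wpow_add d (k' * (a + (j + j') - b)) (-(2⁻¹ * k * j) + k * (a + j)))
      _ = ∑ j' : ZMod d, ∑ a : ZMod d, ∑ b : ZMod d, ∑ k' : ZMod d,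
            wpow d (k' * (a + (j + j') - b)) *
              (wpow d (-(2⁻¹ * k * j) + k * (a + j)) *
                (G a (a + (j + j')) * H b (b + -j'))) := by
        rw [Finset.sum_comm]
        refine Finset.sum_congr rfl fun j' _ => ?_
        rw [Finset.sum_comm]
        refine Finset.sum_congr rfl fun a _ => ?_
        rw [Finset.sum_comm]
      _ = ∑ j' : ZMod d, ∑ a : ZMod d, ∑ b : ZMod d,
            (if a + (j + j') - b = 0 then (d : ℂ) else 0) *
              (wpow d (-(2⁻¹ * k * j) + k * (a + j)) *
                (G a (a + (j + j')) * H b (b + -j'))) := by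
        refine Finset.sum_congr rfl fun j' _ => Finset.sum_congr rfl fun a _ =>
          Finset.sum_congr rfl fun b _ => ?_
        rw [← Finset.sum_mul, sum_wpow_mul d hd]
      _ = ∑ j' : ZMod d, ∑ a : ZMod d, (d : ℂ) *
            (wpow d (-(2⁻¹ * k * j) + k * (a + j)) *
              (G a (a + (j + j')) * H (a + (j + j')) (a + j))) := by
        refine Finset.sum_congr rfl fun j' _ => Finset.sum_congr rfl fun a _ => ?_
        rw [Finset.sum_eq_single (a + (j + j'))]
        · rw [sub_self, if_pos rfl]
          have hidx : a + (j + j') + -j' = a + j := by ring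
          rw [hidx]
        · intro b _ hb
          rw [if_neg (fun h => hb (sub_eq_zero.mp h).symm), zero_mul]
        · simp
      _ = (d : ℂ) * ∑ a : ZMod d,
            wpow d (-(2⁻¹ * k * j) + k * (a + j)) * (G * H) a (a + j) := by
        rw [Finset.sum_comm, Finset.mul_sum]
        refine Finset.sum_congr rfl fun a _ => ?_
        rw [Matrix.mul_apply, Finset.mul_sum, Finset.mul_sum]
        refine Fintype.sum_equiv (Equiv.addLeft (a + j)) _ _ fun j' => ?_
        show _ = (d : ℂ) * (wpow d (-(2⁻¹ * k * j) + k * (a + j)) *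
          (G a ((a + j) + j') * H ((a + j) + j') (a + j)))
        rw [add_assoc]
  rw [key, ← mul_assoc, one_div, inv_mul_cancel₀ hdc, one_mul]
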